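/- Subset entropy inequality of Yeung and Zhang (Theorem 2): For any L ≥ 1 and any λ = (λ_1,…,λ_L) with all λ_l ≥ 0, there exists a function c_λ : {nonempty subsets of {1,…,L}} → ℝ≥0 such that: (1) for each α ∈ {1,…,L}, the restriction c_λ^{(α)} := {c_λ(U) : U ∈ Ω_L^{(α)}} is an optimal solution to the linear program defining f_α(λ) — that is, it is feasible (c_λ(U) ≥ 0 and ∑_{U ∈ Ω_L^{(α)}, U ∋ l} c_λ(U) ≤ λ_l for every l) and ∑_{U ∈ Ω_L^{(α)}} c_λ(U) = f_α(λ); and (2) for each α ∈ {2,…,L} and any jointly distributed random variables X_1,…,X_L each taking values in a finite set, ∑_{V ∈ Ω_L^{(α−1)}} c_λ(V) H(X_V) ≥ ∑_{U ∈ Ω_L^{(α)}} c_λ(U) H(X_U). -/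

import Mathlib

/-!
By LP duality `F_α := f_α(λ)` is the minimum over `T` with `|T| < α` of
`(∑_{l ∉ T} λ_l) / (α - |T|)`, and every nonnegative `c` on `α`-sets that loads each `l` with
exactly `min λ_l F_α` is optimal. Such solutions are built from level `L` downwards. Given one,
`c`, at level `α + 1` with `F_{α+1} > 0`, put `Δ_m = min λ_m F_α - min λ_m F_{α+1}` and
`w_m = (F_α - F_{α+1} - Δ_m) / F_{α+1} ≥ 0`. Every `m` with `Δ_m > 0` is saturated at level
`α + 1`, hence lies in every `U` with `c U ≠ 0`, and this gives
`∑_{m ∈ U \ {l}} w_m = 1 + Δ_l / F_{α+1}` for `l ∈ U`. Hence `ν V = ∑_{m ∉ V} c (V ∪ {m}) w_m`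
is optimal at level `α`, and a weighted Han inequality for nonnegative submodular set functions
such as `U ↦ H(X_U)` gives `∑_U c U H(X_U) ≤ ∑_V ν V H(X_V)`. If `F_{α+1} = 0`, the upper level
vanishes and `λ` is supported on some `α`-set `P`, so `F_α` times the indicator of `P` is optimal.
-/

open MeasureTheory ProbabilityTheory

noncomputable def entH {Ω : Type*} [MeasurableSpace Ω] (μ : Measure Ω)
    {S : Type*} [Fintype S] (X : Ω → S) : ℝ :=
  ∑ s : S, Real.negMulLog ((μ (X ⁻¹' {s})).toReal)

noncomputable def condEntH {Ω : Type*} [MeasurableSpace Ω] (μ : Measure Ω)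
    {S T : Type*} [Fintype S] [Fintype T] (X : Ω → S) (Y : Ω → T) : ℝ :=
  entH μ (fun ω => (X ω, Y ω)) - entH μ Y

def jointOn {Ω : Type*} {ι : Type*} {S : ι → Type*} (X : ∀ i, Ω → S i) (U : Finset ι) :
    Ω → ((i : U) → S i) := fun ω i => X i ω

noncomputable def entHset {Ω : Type*} [MeasurableSpace Ω] (μ : Measure Ω)
    {ι : Type*} [DecidableEq ι] {S : ι → Type*} [∀ i, Fintype (S i)]
    (X : ∀ i, Ω → S i) (U : Finset ι) : ℝ :=
  entH μ (jointOn X U)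

noncomputable def condEntHset {Ω : Type*} [MeasurableSpace Ω] (μ : Measure Ω)
    {ι : Type*} [DecidableEq ι] {S : ι → Type*} [∀ i, Fintype (S i)]
    (X : ∀ i, Ω → S i) (U A : Finset ι) : ℝ :=
  condEntH μ (jointOn X U) (jointOn X A)

/-- `Ω_L^{(α)}`: the collection of all `α`-element subsets of the index set. -/
def OmegaL (L α : ℕ) : Finset (Finset (Fin L)) :=
  Finset.powersetCard α (Finset.univ : Finset (Fin L))

/-- `f_α(λ)`: the optimal value of the covering linear program. -/
noncomputable def fLP (L : ℕ) (lam : Fin L → ℝ) (α : ℕ) : ℝ :=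
  sSup { x : ℝ | ∃ c : Finset (Fin L) → ℝ,
    (∀ U ∈ OmegaL L α, 0 ≤ c U) ∧
    (∀ l : Fin L, ∑ U ∈ (OmegaL L α).filter (fun U => l ∈ U), c U ≤ lam l) ∧
    x = ∑ U ∈ OmegaL L α, c U }

/-- `c` is an optimal solution of the linear program defining `f_α(λ)`. -/
def IsOptimal (L : ℕ) (lam : Fin L → ℝ) (α : ℕ) (c : Finset (Fin L) → ℝ) : Prop :=
  (∀ U ∈ OmegaL L α, 0 ≤ c U) ∧
  (∀ l : Fin L, ∑ U ∈ (OmegaL L α).filter (fun U => l ∈ U), c U ≤ lam l) ∧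
  ∑ U ∈ OmegaL L α, c U = fLP L lam α

open Finset Real

theorem negMulLog_le_neg_mul_log_add_sub {q r : ℝ} (hq : 0 ≤ q) (hr : 0 ≤ r)
    (hqr : 0 < q → 0 < r) : negMulLog q ≤ -q * log r + (r - q) := by
  rcases hq.eq_or_lt with rfl | hq
  · simpa using hr
  have hlog := mul_le_mul_of_nonneg_left (log_le_sub_one_of_pos (div_pos (hqr hq) hq)) hq.le
  rw [log_div (hqr hq).ne' hq.ne', mul_sub_one, mul_div_cancel₀ r hq.ne'] at hlog
  rw [negMulLog]
  linarith

theorem sum_negMulLog_add_negMulLog_sum_le {A C : Type*} [Fintype A] [Fintype C]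
    (q : A → C → ℝ) (hq : ∀ a c, 0 ≤ q a c) :
    ∑ a, ∑ c, negMulLog (q a c) + negMulLog (∑ a, ∑ c, q a c) ≤
      ∑ a, negMulLog (∑ c, q a c) + ∑ c, negMulLog (∑ a, q a c) := by
  set x : A → ℝ := fun a => ∑ c, q a c
  set y : C → ℝ := fun c => ∑ a, q a c
  set m := ∑ a, ∑ c, q a c
  have hx : ∀ a c, q a c ≤ x a := fun a c => single_le_sum (fun c _ => hq a c) (mem_univ c)
  have hy : ∀ a c, q a c ≤ y c := fun a c => single_le_sum (fun a _ => hq a c) (mem_univ a)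
  have hm : ∀ a, x a ≤ m := fun a =>
    single_le_sum (fun a _ => sum_nonneg fun c _ => hq a c) (mem_univ a)
  -- Gibbs' inequality against the product of the marginals `x a * y c / m`
  have hpoint : ∀ a c, negMulLog (q a c) ≤
      (q a c * log m - q a c * log (x a) - q a c * log (y c)) + (x a * y c / m - q a c) := by
    intro a c
    rcases (hq a c).eq_or_lt with h | h
    · have hxy := mul_nonneg (h.le.trans (hx a c)) (h.le.trans (hy a c))
      simpa [← h] using div_nonneg hxy (h.le.trans ((hx a c).trans (hm a)))
    have hxa := h.trans_le (hx a c)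
    have hyc := h.trans_le (hy a c)
    have hma := hxa.trans_le (hm a)
    have := negMulLog_le_neg_mul_log_add_sub (r := x a * y c / m) h.le (by positivity)
      fun _ => by positivity
    rw [log_div (by positivity) hma.ne', log_mul hxa.ne' hyc.ne'] at this
    linarith
  have hprod : ∑ a, ∑ c, x a * y c / m = m := by
    have hy_sum : ∑ c, y c = m := sum_comm
    have hx_sum : ∑ a, x a = m := rfl
    simp_rw [mul_div_assoc, ← mul_sum, ← sum_div, hy_sum, ← sum_mul, hx_sum]
    rcases eq_or_ne m 0 with h | h
    · simp [h]
    · rw [div_self h, mul_one]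
  calc ∑ a, ∑ c, negMulLog (q a c) + negMulLog m
      ≤ ∑ a, ∑ c, ((q a c * log m - q a c * log (x a) - q a c * log (y c)) +
          (x a * y c / m - q a c)) + negMulLog m :=
        by gcongr with a _ c; exact hpoint a c
    _ = ∑ a, negMulLog (x a) + ∑ c, negMulLog (y c) := by
        have hqm : ∑ a, ∑ c, q a c * log m = m * log m := by simp only [← sum_mul]; rfl
        have hqx : ∑ a, ∑ c, q a c * log (x a) = ∑ a, x a * log (x a) := by
          simp only [← sum_mul]; rfl
        have hqy : ∑ a, ∑ c, q a c * log (y c) = ∑ c, y c * log (y c) := by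
          rw [sum_comm]; simp only [← sum_mul]; rfl
        simp only [sum_add_distrib, sum_sub_distrib, hqm, hqx, hqy, hprod, negMulLog,
          neg_mul, sum_neg_distrib]
        ring

section Entropy

variable {Ω : Type*} [MeasurableSpace Ω] (μ : Measure Ω)

theorem entH_nonneg [IsProbabilityMeasure μ] {S : Type*} [Fintype S] (X : Ω → S) :
    0 ≤ entH μ X :=
  sum_nonneg fun _ _ => negMulLog_nonneg ENNReal.toReal_nonneg measureReal_le_one

theorem entH_comp_of_injective {S T : Type*} [Fintype S] [Fintype T] (X : Ω → S) {f : S → T}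
    (hf : Function.Injective f) : entH μ (f ∘ X) = entH μ X := by
  refine (Fintype.sum_of_injective f hf _ _ (fun t ht => ?_) (fun s => ?_)).symm
  · have : (f ∘ X) ⁻¹' {t} = ∅ := by
      ext ω
      simpa using fun h => ht ⟨X ω, h⟩
    simp [this]
  · rw [Set.preimage_comp, ← Set.image_singleton, hf.preimage_image]

variable {A B C : Type*} [Fintype A] [Fintype B] [Fintype C]

theorem entH_prod (Y : Ω → A) (Z : Ω → B) :
    entH μ (fun ω => (Y ω, Z ω)) = ∑ a, ∑ b, negMulLog (μ.real (Y ⁻¹' {a} ∩ Z ⁻¹' {b})) := by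
  simp only [entH, Fintype.sum_prod_type, ← Set.singleton_prod_singleton, Set.mk_preimage_prod]
  rfl

theorem sum_measureReal_inter_preimage_singleton [IsFiniteMeasure μ] [MeasurableSpace C]
    [MeasurableSingletonClass C] {T : Ω → C} (hT : Measurable T) (E : Set Ω) :
    ∑ c, μ.real (E ∩ T ⁻¹' {c}) = μ.real E := by
  have := sum_measureReal_preimage_singleton (μ := μ.restrict E) univ
    (fun c _ => hT (measurableSet_singleton c))
  simpa [measureReal_restrict_apply (hT (measurableSet_singleton _)), Set.inter_comm] using this

theorem entH_submodular [IsFiniteMeasure μ] [MeasurableSpace A] [MeasurableSingletonClass A]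
    [MeasurableSpace C] [MeasurableSingletonClass C] {Y : Ω → A} (Z : Ω → B) {T : Ω → C}
    (hY : Measurable Y) (hT : Measurable T) :
    entH μ (fun ω => (Y ω, Z ω, T ω)) + entH μ Z ≤
      entH μ (fun ω => (Y ω, Z ω)) + entH μ (fun ω => (Z ω, T ω)) := by
  set q : B → A → C → ℝ := fun b a c => μ.real (Y ⁻¹' {a} ∩ Z ⁻¹' {b} ∩ T ⁻¹' {c})
  have hYZT : entH μ (fun ω => (Y ω, Z ω, T ω)) = ∑ b, ∑ a, ∑ c, negMulLog (q b a c) := by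
    rw [entH_prod]
    simp only [Fintype.sum_prod_type, ← Set.singleton_prod_singleton, Set.mk_preimage_prod,
      Set.inter_assoc, q]
    rw [sum_comm]
  have hYZ : entH μ (fun ω => (Y ω, Z ω)) = ∑ b, ∑ a, negMulLog (∑ c, q b a c) := by
    simp only [entH_prod, q, sum_measureReal_inter_preimage_singleton μ hT]
    rw [sum_comm]
  have hZT : entH μ (fun ω => (Z ω, T ω)) = ∑ b, ∑ c, negMulLog (∑ a, q b a c) := by
    have (b : B) (a : A) (c : C) : q b a c = μ.real (Z ⁻¹' {b} ∩ T ⁻¹' {c} ∩ Y ⁻¹' {a}) := by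
      simp only [q, Set.inter_comm _ (Y ⁻¹' {a}), Set.inter_assoc]
    simp only [entH_prod, this, sum_measureReal_inter_preimage_singleton μ hY]
  have hZ : entH μ Z = ∑ b, negMulLog (∑ a, ∑ c, q b a c) := by
    have (b : B) (a : A) : μ.real (Y ⁻¹' {a} ∩ Z ⁻¹' {b}) = μ.real (Z ⁻¹' {b} ∩ Y ⁻¹' {a}) := by
      rw [Set.inter_comm]
    simp only [q, sum_measureReal_inter_preimage_singleton μ hT, this,
      sum_measureReal_inter_preimage_singleton μ hY]
    rfl
  rw [hYZT, hYZ, hZT, hZ, ← sum_add_distrib, ← sum_add_distrib]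
  exact sum_le_sum fun b _ =>
    sum_negMulLog_add_negMulLog_sum_le (q b) fun a c => measureReal_nonneg

theorem measurable_jointOn {ι : Type*} {S : ι → Type*} [∀ i, MeasurableSpace (S i)]
    {X : ∀ i, Ω → S i} (hX : ∀ i, Measurable (X i)) (U : Finset ι) : Measurable (jointOn X U) :=
  measurable_pi_lambda _ fun i => hX i

variable {ι : Type*} [DecidableEq ι] {S : ι → Type*} [∀ i, Fintype (S i)]
  [∀ i, MeasurableSpace (S i)] [∀ i, MeasurableSingletonClass (S i)]

theorem entHset_union_add_inter_le [IsFiniteMeasure μ] {X : ∀ i, Ω → S i}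
    (hX : ∀ i, Measurable (X i)) (A B : Finset ι) :
    entHset μ X (A ∪ B) + entHset μ X (A ∩ B) ≤ entHset μ X A + entHset μ X B := by
  have hA : entHset μ X A = entH μ (fun ω => (jointOn X A ω, jointOn X (A ∩ B) ω)) :=
    (entH_comp_of_injective μ (jointOn X A) (f := fun p => (p, restrict₂ inter_subset_left p))
      fun _ _ h => (Prod.ext_iff.1 h).1).symm
  have hB : entHset μ X B = entH μ (fun ω => (jointOn X (A ∩ B) ω, jointOn X B ω)) :=
    (entH_comp_of_injective μ (jointOn X B) (f := fun p => (restrict₂ inter_subset_right p, p))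
      fun _ _ h => (Prod.ext_iff.1 h).2).symm
  have hU : entHset μ X (A ∪ B) =
      entH μ (fun ω => (jointOn X A ω, jointOn X (A ∩ B) ω, jointOn X B ω)) := by
    refine (entH_comp_of_injective μ (jointOn X (A ∪ B))
      (f := fun p => (restrict₂ subset_union_left p,
        restrict₂ (inter_subset_left.trans subset_union_left) p, restrict₂ subset_union_right p))
      fun p p' h => ?_).symm
    simp only [Prod.mk.injEq] at h
    funext ⟨i, hi⟩
    rcases mem_union.1 hi with hi | hi
    · exact congrFun h.1 ⟨i, hi⟩
    · exact congrFun h.2.2 ⟨i, hi⟩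
  rw [hA, hB, hU]
  exact entH_submodular μ _ (measurable_jointOn hX A) (measurable_jointOn hX B)

end Entropy

section Submodular

variable {ι : Type*} [DecidableEq ι] {h : Finset ι → ℝ}

theorem card_sub_one_mul_add_le_sum_erase (hsub : ∀ A B, h (A ∪ B) + h (A ∩ B) ≤ h A + h B)
    {W M : Finset ι} (hMW : M ⊆ W) :
    (#M - 1 : ℝ) * h W + h (W \ M) ≤ ∑ m ∈ M, h (W.erase m) := by
  induction M using Finset.induction_on with
  | empty => simp
  | insert m M hm ih =>
    have hmW : m ∈ W := hMW (mem_insert_self m M)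
    have hunion : W.erase m ∪ W \ M = W := by
      ext x
      by_cases hx : x = m
      · simp [hx, hmW, hm]
      · simp only [mem_union, mem_erase, mem_sdiff]
        tauto
    have hinter : W.erase m ∩ (W \ M) = W \ insert m M := by
      ext x
      simp only [mem_inter, mem_erase, mem_sdiff, mem_insert]
      tauto
    have hstep := hsub (W.erase m) (W \ M)
    rw [hunion, hinter] at hstep
    rw [sum_insert hm, card_insert_of_notMem hm]
    push_cast
    linarith [ih ((subset_insert m M).trans hMW)]

theorem mul_le_sum_mul_erase (h0 : ∀ A, 0 ≤ h A)
    (hsub : ∀ A B, h (A ∪ B) + h (A ∩ B) ≤ h A + h B) {W M : Finset ι} (hMW : M ⊆ W)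
    (hM : M.Nonempty) {w : ι → ℝ} (hw : ∀ m ∈ M, 0 ≤ w m) {c : ℝ}
    (hc : ∀ l ∈ M, c ≤ ∑ m ∈ M.erase l, w m) :
    c * h W ≤ ∑ m ∈ M, w m * h (W.erase m) := by
  induction M using Finset.strongInduction generalizing w c with | H M ih =>
  obtain ⟨m₀, hm₀, hmin⟩ := exists_min_image M w hM
  rcases (M.erase m₀).eq_empty_or_nonempty with hM' | hM'
  · have hc0 : c ≤ 0 := by simpa [hM'] using hc m₀ hm₀
    exact (mul_nonpos_of_nonpos_of_nonneg hc0 (h0 W)).trans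
      (sum_nonneg fun m hm => mul_nonneg (hw m hm) (h0 (W.erase m)))
  -- lower all weights by the least one, `w m₀`; the removed part is bounded by Han's inequality
  have hrest := ih (M.erase m₀) (erase_ssubset hm₀) ((erase_subset _ _).trans hMW) hM'
    (w := fun m => w m - w m₀) (c := c - (#M - 1) * w m₀)
    (fun m hm => sub_nonneg.2 (hmin m (mem_of_mem_erase hm))) fun l hl => by
      have hlM := mem_of_mem_erase hl
      have hsplit := add_sum_erase (M.erase l) w (mem_erase.2 ⟨(ne_of_mem_erase hl).symm, hm₀⟩)
      have hcard : #((M.erase m₀).erase l) + 1 + 1 = #M := by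
        rw [card_erase_add_one hl, card_erase_add_one hm₀]
      rw [erase_right_comm] at hsplit
      rw [sum_sub_distrib, sum_const, nsmul_eq_mul, ← hcard]
      have := hc l hlM
      push_cast
      linarith
  have hhan := mul_le_mul_of_nonneg_left (card_sub_one_mul_add_le_sum_erase hsub hMW) (hw m₀ hm₀)
  have hsplit : ∑ m ∈ M, w m * h (W.erase m) = ∑ m ∈ M.erase m₀, (w m - w m₀) * h (W.erase m)
      + w m₀ * ∑ m ∈ M, h (W.erase m) := by
    simp only [sub_mul, sum_sub_distrib, mul_sum]
    rw [← add_sum_erase M _ hm₀, ← add_sum_erase M (fun m => w m₀ * h (W.erase m)) hm₀]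
    ring
  linarith [mul_nonneg (hw m₀ hm₀) (h0 (W \ M))]

end Submodular

noncomputable def fDual (L : ℕ) (lam : Fin L → ℝ) (α : ℕ) : ℝ :=
  if h : 0 < α then
    (univ.filter fun T : Finset (Fin L) => #T < α).inf' ⟨∅, by simp [h]⟩
      fun T => (∑ l ∈ Tᶜ, lam l) / (α - #T)
  else 0

def load (L α : ℕ) (c : Finset (Fin L) → ℝ) (l : Fin L) : ℝ :=
  ∑ U ∈ (OmegaL L α).filter (fun U => l ∈ U), c U

def IsMinLoad (L : ℕ) (lam : Fin L → ℝ) (α : ℕ) (c : Finset (Fin L) → ℝ) : Prop :=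
  (∀ U ∈ OmegaL L α, 0 ≤ c U) ∧ ∀ l, load L α c l = min (lam l) (fDual L lam α)

section LinearProgram

variable {L : ℕ} {lam : Fin L → ℝ} {α : ℕ}

theorem mem_OmegaL {U : Finset (Fin L)} : U ∈ OmegaL L α ↔ #U = α := by
  simp [OmegaL, mem_powersetCard]

theorem insert_mem_OmegaL {V : Finset (Fin L)} (hV : V ∈ OmegaL L α) {m : Fin L} (hm : m ∉ V) :
    insert m V ∈ OmegaL L (α + 1) := by
  rw [mem_OmegaL] at hV ⊢
  rw [card_insert_of_notMem hm, hV]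

theorem fDual_le (hα : 0 < α) {T : Finset (Fin L)} (hT : #T < α) :
    fDual L lam α ≤ (∑ l ∈ Tᶜ, lam l) / (α - #T) := by
  rw [fDual, dif_pos hα]
  exact inf'_le _ (mem_filter.2 ⟨mem_univ T, hT⟩)

theorem exists_fDual_eq (hα : 0 < α) :
    ∃ T : Finset (Fin L), #T < α ∧ fDual L lam α = (∑ l ∈ Tᶜ, lam l) / (α - #T) := by
  rw [fDual, dif_pos hα]
  obtain ⟨T, hT, hTeq⟩ := exists_mem_eq_inf' (⟨∅, by simp [hα]⟩ :
    (univ.filter fun T : Finset (Fin L) => #T < α).Nonempty) fun T => (∑ l ∈ Tᶜ, lam l) / (α - #T)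
  exact ⟨T, (mem_filter.1 hT).2, hTeq⟩

theorem sub_card_pos {ι : Type*} {T : Finset ι} (hT : #T < α) : (0 : ℝ) < α - #T :=
  sub_pos.2 (by exact_mod_cast hT)

theorem fDual_nonneg (hlam : ∀ l, 0 ≤ lam l) (α : ℕ) : 0 ≤ fDual L lam α := by
  by_cases hα : 0 < α
  · obtain ⟨T, hT, hTeq⟩ := exists_fDual_eq (lam := lam) hα
    rw [hTeq]
    exact div_nonneg (sum_nonneg fun l _ => hlam l) (sub_card_pos hT).le
  · rw [fDual, dif_neg hα]

theorem fDual_succ_le (hlam : ∀ l, 0 ≤ lam l) (hα : 0 < α) :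
    fDual L lam (α + 1) ≤ fDual L lam α := by
  obtain ⟨T, hT, hTeq⟩ := exists_fDual_eq (lam := lam) hα
  rw [hTeq]
  refine (fDual_le (α.succ_pos) (Nat.lt_succ_of_lt hT)).trans ?_
  apply div_le_div_of_nonneg_left (sum_nonneg fun l _ => hlam l) (sub_card_pos hT)
  push_cast
  linarith

theorem sum_min_fDual (hlam : ∀ l, 0 ≤ lam l) (hα : 0 < α) :
    ∑ l, min (lam l) (fDual L lam α) = α * fDual L lam α := by
  set F := fDual L lam α
  apply le_antisymm
  · obtain ⟨T, hT, hTeq⟩ := exists_fDual_eq (lam := lam) hα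
    have hTc : ∑ l ∈ Tᶜ, lam l = (α - #T) * F := by
      rw [show F = _ from hTeq, mul_div_cancel₀ _ (sub_card_pos hT).ne']
    have hT_le : ∑ l ∈ T, min (lam l) F ≤ #T * F := by
      simpa using sum_le_sum fun l (_ : l ∈ T) => min_le_right (lam l) F
    have hTc_le : ∑ l ∈ Tᶜ, min (lam l) F ≤ (α - #T) * F :=
      hTc ▸ sum_le_sum fun l _ => min_le_left _ _
    rw [← sum_add_sum_compl T]
    linarith
  · set T := univ.filter fun l => F < lam l
    have hT : ∑ l ∈ T, min (lam l) F = #T * F := by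
      rw [sum_congr rfl fun l hl => min_eq_right (mem_filter.1 hl).2.le]
      simp
    have hTc : ∑ l ∈ Tᶜ, min (lam l) F = ∑ l ∈ Tᶜ, lam l :=
      sum_congr rfl fun l hl => min_eq_left (by simpa [T] using hl)
    rcases lt_or_ge #T α with hTα | hTα
    · have := (le_div_iff₀ (sub_card_pos hTα)).1 (fDual_le (lam := lam) hα hTα)
      rw [← sum_add_sum_compl T, hT, hTc]
      linarith
    · have hF0 := fDual_nonneg hlam α
      calc (α : ℝ) * F ≤ #T * F := by gcongr
        _ = ∑ l ∈ T, min (lam l) F := hT.symm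
        _ ≤ ∑ l, min (lam l) F :=
          sum_le_sum_of_subset_of_nonneg (subset_univ T) fun l _ _ => le_min (hlam l) hF0

theorem sum_le_fDual (hα : 0 < α) {c : Finset (Fin L) → ℝ} (hc0 : ∀ U ∈ OmegaL L α, 0 ≤ c U)
    (hcov : ∀ l, load L α c l ≤ lam l) : ∑ U ∈ OmegaL L α, c U ≤ fDual L lam α := by
  obtain ⟨T, hT, hTeq⟩ := exists_fDual_eq (lam := lam) hα
  rw [hTeq, le_div_iff₀ (sub_card_pos hT)]
  have hU : ∀ U ∈ OmegaL L α, c U * (α - #T) ≤ #(U \ T) * c U := by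
    intro U hU
    have : α ≤ #(U \ T) + #T := (mem_powersetCard.1 hU).2 ▸ card_le_card_sdiff_add_card
    rw [mul_comm]
    exact mul_le_mul_of_nonneg_right (by rw [sub_le_iff_le_add]; exact_mod_cast this) (hc0 U hU)
  calc (∑ U ∈ OmegaL L α, c U) * (α - #T) ≤ ∑ U ∈ OmegaL L α, #(U \ T) * c U := by
        rw [sum_mul]; exact sum_le_sum hU
    _ = ∑ l ∈ Tᶜ, load L α c l := by
        simp only [load, ← nsmul_eq_mul, ← sum_const]
        apply sum_comm'
        simp only [mem_sdiff, mem_filter, mem_compl]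
        tauto
    _ ≤ ∑ l ∈ Tᶜ, lam l := sum_le_sum fun l _ => hcov l

theorem fLP_eq_fDual (hα : 0 < α) {c : Finset (Fin L) → ℝ} (hc0 : ∀ U ∈ OmegaL L α, 0 ≤ c U)
    (hcov : ∀ l, load L α c l ≤ lam l) (hsum : ∑ U ∈ OmegaL L α, c U = fDual L lam α) :
    fLP L lam α = fDual L lam α := by
  have hbdd : ∀ x ∈ { x : ℝ | ∃ c : Finset (Fin L) → ℝ, (∀ U ∈ OmegaL L α, 0 ≤ c U) ∧
      (∀ l : Fin L, ∑ U ∈ (OmegaL L α).filter (fun U => l ∈ U), c U ≤ lam l) ∧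
      x = ∑ U ∈ OmegaL L α, c U }, x ≤ fDual L lam α := by
    rintro x ⟨c, hc0, hcov, rfl⟩
    exact sum_le_fDual hα hc0 hcov
  exact le_antisymm (csSup_le ⟨_, c, hc0, hcov, hsum.symm⟩ hbdd)
    (le_csSup ⟨_, hbdd⟩ ⟨c, hc0, hcov, hsum.symm⟩)

theorem sum_load (c : Finset (Fin L) → ℝ) :
    ∑ l, load L α c l = α * ∑ U ∈ OmegaL L α, c U := by
  simp only [load, sum_filter]
  rw [sum_comm, mul_sum]
  refine sum_congr rfl fun U hU => ?_
  rw [sum_ite_mem, univ_inter, sum_const, (mem_powersetCard.1 hU).2, nsmul_eq_mul]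

theorem IsMinLoad.sum_eq (hlam : ∀ l, 0 ≤ lam l) (hα : 0 < α) {c : Finset (Fin L) → ℝ}
    (hc : IsMinLoad L lam α c) : ∑ U ∈ OmegaL L α, c U = fDual L lam α := by
  have := sum_load (α := α) c
  simp only [hc.2, sum_min_fDual hlam hα] at this
  exact (mul_left_cancel₀ (by exact_mod_cast hα.ne') this).symm

theorem IsMinLoad.isOptimal (hlam : ∀ l, 0 ≤ lam l) (hα : 0 < α) {c : Finset (Fin L) → ℝ}
    (hc : IsMinLoad L lam α c) : IsOptimal L lam α c := by
  have hcov : ∀ l, load L α c l ≤ lam l := fun l => (hc.2 l).trans_le (min_le_left _ _)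
  exact ⟨hc.1, hcov, (hc.sum_eq hlam hα).trans (fLP_eq_fDual hα hc.1 hcov (hc.sum_eq hlam hα)).symm⟩

theorem IsMinLoad.congr {c c' : Finset (Fin L) → ℝ} (hc : IsMinLoad L lam α c)
    (h : ∀ U ∈ OmegaL L α, c U = c' U) : IsMinLoad L lam α c' := by
  refine ⟨fun U hU => h U hU ▸ hc.1 U hU, fun l => ?_⟩
  rw [← hc.2 l, load, load]
  exact (sum_congr rfl fun U hU => h U (mem_filter.1 hU).1).symm

end LinearProgram

section Indicator

variable {L : ℕ} {lam : Fin L → ℝ} {α : ℕ}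

theorem isMinLoad_indicator (hlam : ∀ l, 0 ≤ lam l) (hα : 0 < α) {P : Finset (Fin L)}
    (hP : #P = α) (hoff : ∀ l ∉ P, lam l = 0) :
    IsMinLoad L lam α fun U => if U = P then fDual L lam α else 0 := by
  have hF0 := fDual_nonneg hlam (L := L) α
  refine ⟨fun _ _ => ite_nonneg hF0 le_rfl, fun l => ?_⟩
  rw [load, sum_ite_eq']
  by_cases hl : l ∈ P
  · have hcard : #(P.erase l) + 1 = α := hP ▸ card_erase_add_one hl
    have hden : (α : ℝ) - #(P.erase l) = 1 := by rw [← hcard]; push_cast; ring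
    have hle := fDual_le (lam := lam) hα (T := P.erase l) (by omega)
    rw [compl_erase, sum_insert (by simp [hl]), sum_eq_zero fun m hm => hoff m (mem_compl.1 hm),
      add_zero, hden, div_one] at hle
    simp [mem_OmegaL, hP, hl, hle]
  · simp [hl, hoff l hl, hF0]

theorem exists_isMinLoad_of_fDual_succ_eq_zero (hlam : ∀ l, 0 ≤ lam l) (hα : 0 < α)
    (hαL : α ≤ L) (hF : fDual L lam (α + 1) = 0) : ∃ c, IsMinLoad L lam α c := by
  obtain ⟨T, hT, hTeq⟩ := exists_fDual_eq (lam := lam) (α.succ_pos)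
  rw [hF, eq_comm, div_eq_zero_iff, or_iff_left (sub_card_pos hT).ne',
    sum_eq_zero_iff_of_nonneg fun l _ => hlam l] at hTeq
  obtain ⟨P, hTP, -, hP⟩ := exists_subsuperset_card_eq (subset_univ T) (Nat.lt_succ_iff.1 hT)
    (by simpa using hαL)
  exact ⟨_, isMinLoad_indicator hlam hα hP fun l hl => hTeq l (mem_compl.2 fun h => hl (hTP h))⟩

end Indicator

section PushDown

variable {ι : Type*} [Fintype ι] [DecidableEq ι]

def pushDown (c : Finset ι → ℝ) (δ : ι → ℝ) (V : Finset ι) : ℝ :=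
  ∑ m ∈ Vᶜ, c (insert m V) * δ m

theorem sum_powersetCard_sum_compl_insert (α : ℕ) (g : Finset ι → ι → ℝ) :
    ∑ V ∈ powersetCard α univ, ∑ m ∈ Vᶜ, g (insert m V) m =
      ∑ U ∈ powersetCard (α + 1) univ, ∑ m ∈ U, g U m := by
  rw [sum_sigma', sum_sigma']
  refine sum_nbij' (fun p => ⟨insert p.2 p.1, p.2⟩) (fun p => ⟨p.1.erase p.2, p.2⟩) ?_ ?_ ?_ ?_
    fun _ _ => rfl
  · rintro ⟨V, m⟩ hp
    simp only [mem_sigma, mem_powersetCard, mem_compl, subset_univ, true_and] at hp ⊢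
    exact ⟨by rw [card_insert_of_notMem hp.2, hp.1], mem_insert_self m V⟩
  · rintro ⟨U, m⟩ hp
    simp only [mem_sigma, mem_powersetCard, mem_compl, subset_univ, true_and] at hp ⊢
    exact ⟨by rw [card_erase_of_mem hp.2, hp.1, Nat.add_sub_cancel], notMem_erase m U⟩
  · rintro ⟨V, m⟩ hp
    simp only [mem_sigma, mem_compl] at hp
    simp [erase_insert hp.2]
  · rintro ⟨U, m⟩ hp
    simp only [mem_sigma] at hp
    simp [insert_erase hp.2]

theorem sum_pushDown_mul (α : ℕ) (c : Finset ι → ℝ) (δ : ι → ℝ) (H : Finset ι → ℝ) :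
    ∑ V ∈ powersetCard α univ, pushDown c δ V * H V =
      ∑ U ∈ powersetCard (α + 1) univ, c U * ∑ m ∈ U, δ m * H (U.erase m) := by
  simp only [mul_sum, ← mul_assoc]
  rw [← sum_powersetCard_sum_compl_insert]
  refine sum_congr rfl fun V _ => ?_
  rw [pushDown, sum_mul]
  exact sum_congr rfl fun m hm => by rw [erase_insert (mem_compl.1 hm)]

end PushDown

section Descent

variable {L : ℕ} {lam : Fin L → ℝ} {α : ℕ}

theorem load_pushDown (c : Finset (Fin L) → ℝ) (δ : Fin L → ℝ) (l : Fin L) :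
    load L α (pushDown c δ) l =
      ∑ U ∈ (OmegaL L (α + 1)).filter (fun U => l ∈ U), c U * ∑ m ∈ U.erase l, δ m := by
  have := sum_pushDown_mul α c δ fun V => if l ∈ V then 1 else 0
  simp only [mul_ite, mul_one, mul_zero] at this
  rw [load, sum_filter]
  refine this.trans ?_
  rw [sum_filter]
  refine sum_congr rfl fun U _ => ?_
  split_ifs with hl
  · rw [← sum_filter]
    congr 2
    ext m
    simp [hl, and_comm, eq_comm]
  · simp [hl]

theorem mem_of_load_eq_sum {c : Finset (Fin L) → ℝ} (hc0 : ∀ U ∈ OmegaL L α, 0 ≤ c U) {l : Fin L}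
    (h : load L α c l = ∑ U ∈ OmegaL L α, c U) {U : Finset (Fin L)} (hU : U ∈ OmegaL L α)
    (hcU : c U ≠ 0) : l ∈ U := by
  rw [load, ← sum_filter_add_sum_filter_not (OmegaL L α) (fun U => l ∈ U), left_eq_add,
    sum_eq_zero_iff_of_nonneg fun U hU => hc0 U (mem_filter.1 hU).1] at h
  by_contra hl
  exact hcU (h U (mem_filter.2 ⟨hU, hl⟩))

noncomputable def excess (L : ℕ) (lam : Fin L → ℝ) (α : ℕ) (l : Fin L) : ℝ :=
  min (lam l) (fDual L lam α) - min (lam l) (fDual L lam (α + 1))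

noncomputable def descentWeight (L : ℕ) (lam : Fin L → ℝ) (α : ℕ) (m : Fin L) : ℝ :=
  (fDual L lam α - fDual L lam (α + 1) - excess L lam α m) / fDual L lam (α + 1)

theorem excess_nonneg (hlam : ∀ l, 0 ≤ lam l) (hα : 0 < α) (l : Fin L) :
    0 ≤ excess L lam α l :=
  sub_nonneg.2 (min_le_min_left _ (fDual_succ_le hlam hα))

theorem excess_le (hlam : ∀ l, 0 ≤ lam l) (hα : 0 < α) (l : Fin L) :
    excess L lam α l ≤ fDual L lam α - fDual L lam (α + 1) := by
  have := fDual_succ_le hlam hα (L := L)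
  rw [excess]
  rcases le_total (lam l) (fDual L lam (α + 1)) with h | h
  · rw [min_eq_left h, min_eq_left (h.trans this)]
    linarith
  · rw [min_eq_right h]
    linarith [min_le_right (lam l) (fDual L lam α)]

theorem fDual_succ_le_of_excess_ne_zero (hlam : ∀ l, 0 ≤ lam l) (hα : 0 < α) {l : Fin L}
    (h : excess L lam α l ≠ 0) : fDual L lam (α + 1) ≤ lam l := by
  contrapose! h
  rw [excess, min_eq_left h.le, min_eq_left (h.le.trans (fDual_succ_le hlam hα)), sub_self]

theorem descentWeight_nonneg (hlam : ∀ l, 0 ≤ lam l) (hα : 0 < α) (m : Fin L) :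
    0 ≤ descentWeight L lam α m :=
  div_nonneg (by linarith [excess_le hlam hα m]) (fDual_nonneg hlam _)

theorem min_mul_one_add_div {x a b : ℝ} (hb : 0 < b) (hba : b ≤ a) :
    min x b * (1 + (min x a - min x b) / b) = min x a := by
  rcases le_total x b with h | h
  · simp [min_eq_left h, min_eq_left (h.trans hba)]
  · rw [min_eq_right h]
    field_simp
    ring

variable {c : Finset (Fin L) → ℝ}

theorem sum_erase_descentWeight (hlam : ∀ l, 0 ≤ lam l) (hα : 0 < α)
    (hc : IsMinLoad L lam (α + 1) c) {U : Finset (Fin L)} (hU : U ∈ OmegaL L (α + 1))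
    (hcU : c U ≠ 0) {l : Fin L} (hl : l ∈ U) :
    ∑ m ∈ U.erase l, descentWeight L lam α m = 1 + excess L lam α l / fDual L lam (α + 1) := by
  -- a coordinate with positive excess is saturated at level `α + 1`, so it lies in `U`
  have hexcess : ∑ m ∈ U, excess L lam α m =
      α * fDual L lam α - (α + 1) * fDual L lam (α + 1) := by
    rw [sum_subset (subset_univ U) fun m _ hm => ?_]
    · simp only [excess, sum_sub_distrib, sum_min_fDual hlam hα, sum_min_fDual hlam α.succ_pos]
      push_cast
      ring
    by_contra h
    refine hm (mem_of_load_eq_sum hc.1 ?_ hU hcU)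
    rw [hc.2 m, min_eq_right (fDual_succ_le_of_excess_ne_zero hlam hα h),
      hc.sum_eq hlam α.succ_pos]
  have hF : 0 < fDual L lam (α + 1) := hc.sum_eq hlam α.succ_pos ▸
    ((hc.1 U hU).lt_of_ne' hcU).trans_le (single_le_sum hc.1 hU)
  rw [sum_erase_eq_sub hl]
  simp only [descentWeight, ← sum_div, sum_sub_distrib, sum_const, mem_OmegaL.1 hU, hexcess,
    nsmul_eq_mul]
  field_simp
  push_cast
  ring

theorem isMinLoad_pushDown (hlam : ∀ l, 0 ≤ lam l) (hα : 0 < α)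
    (hc : IsMinLoad L lam (α + 1) c) (hF : 0 < fDual L lam (α + 1)) :
    IsMinLoad L lam α (pushDown c (descentWeight L lam α)) := by
  refine ⟨fun V hV => sum_nonneg fun m hm => mul_nonneg
    (hc.1 _ (insert_mem_OmegaL hV (mem_compl.1 hm))) (descentWeight_nonneg hlam hα m), fun l => ?_⟩
  calc load L α (pushDown c (descentWeight L lam α)) l
      = ∑ U ∈ (OmegaL L (α + 1)).filter (fun U => l ∈ U),
          c U * (1 + excess L lam α l / fDual L lam (α + 1)) := by
        rw [load_pushDown]
        refine sum_congr rfl fun U hU => ?_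
        rcases eq_or_ne (c U) 0 with hcU | hcU
        · simp [hcU]
        · rw [mem_filter] at hU
          rw [sum_erase_descentWeight hlam hα hc hU.1 hcU hU.2]
    _ = min (lam l) (fDual L lam α) := by
        rw [← sum_mul, ← load, hc.2 l, excess]
        exact min_mul_one_add_div hF (fDual_succ_le hlam hα)

theorem sum_mul_le_sum_pushDown_mul (hlam : ∀ l, 0 ≤ lam l) (hα : 0 < α)
    (hc : IsMinLoad L lam (α + 1) c) {H : Finset (Fin L) → ℝ} (h0 : ∀ A, 0 ≤ H A)
    (hsub : ∀ A B, H (A ∪ B) + H (A ∩ B) ≤ H A + H B) :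
    ∑ U ∈ OmegaL L (α + 1), c U * H U ≤
      ∑ V ∈ OmegaL L α, pushDown c (descentWeight L lam α) V * H V := by
  rw [OmegaL, OmegaL, sum_pushDown_mul]
  refine sum_le_sum fun U hU => ?_
  rcases eq_or_ne (c U) 0 with hcU | hcU
  · simp [hcU]
  refine mul_le_mul_of_nonneg_left ?_ (hc.1 U hU)
  have hne : U.Nonempty := card_pos.1 (by rw [mem_OmegaL.1 hU]; omega)
  simpa using mul_le_sum_mul_erase h0 hsub subset_rfl hne
    (fun m _ => descentWeight_nonneg hlam hα m) (c := 1) fun l hl => by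
      rw [sum_erase_descentWeight hlam hα hc hU hcU hl]
      exact le_add_of_nonneg_right (div_nonneg (excess_nonneg hlam hα l) (fDual_nonneg hlam _))

theorem exists_isMinLoad_descent (hlam : ∀ l, 0 ≤ lam l) (hα : 0 < α) (hαL : α ≤ L)
    (hc : IsMinLoad L lam (α + 1) c) :
    ∃ ν, IsMinLoad L lam α ν ∧ ∀ H : Finset (Fin L) → ℝ, (∀ A, 0 ≤ H A) →
      (∀ A B, H (A ∪ B) + H (A ∩ B) ≤ H A + H B) →
      ∑ U ∈ OmegaL L (α + 1), c U * H U ≤ ∑ V ∈ OmegaL L α, ν V * H V := by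
  rcases (fDual_nonneg hlam (α + 1)).eq_or_lt with hF | hF
  · obtain ⟨ν, hν⟩ := exists_isMinLoad_of_fDual_succ_eq_zero hlam hα hαL hF.symm
    have hc0 : ∀ U ∈ OmegaL L (α + 1), c U = 0 :=
      (sum_eq_zero_iff_of_nonneg hc.1).1 ((hc.sum_eq hlam α.succ_pos).trans hF.symm)
    refine ⟨ν, hν, fun H h0 _ => ?_⟩
    rw [sum_eq_zero fun U hU => by rw [hc0 U hU, zero_mul]]
    exact sum_nonneg fun V hV => mul_nonneg (hν.1 V hV) (h0 V)
  · exact ⟨_, isMinLoad_pushDown hlam hα hc hF,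
      fun H h0 hsub => sum_mul_le_sum_pushDown_mul hlam hα hc h0 hsub⟩

theorem exists_isMinLoad_levels (hlam : ∀ l, 0 ≤ lam l) (hα : 0 < α) (hαL : α ≤ L) :
    ∃ c, (∀ β ∈ Icc α L, IsMinLoad L lam β c) ∧ ∀ β ∈ Ico α L, ∀ H : Finset (Fin L) → ℝ,
      (∀ A, 0 ≤ H A) → (∀ A B, H (A ∪ B) + H (A ∩ B) ≤ H A + H B) →
      ∑ U ∈ OmegaL L (β + 1), c U * H U ≤ ∑ V ∈ OmegaL L β, c V * H V := by
  induction hαL using Nat.decreasingInduction with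
  | self =>
    refine ⟨fun U => if U = univ then fDual L lam L else 0, fun β hβ => ?_,
      fun β hβ => by simp at hβ⟩
    obtain rfl : β = L := by simp at hβ; omega
    exact isMinLoad_indicator hlam hα (P := univ) (by simp) (by simp)
  | of_succ α hαL ih =>
    obtain ⟨c, hlev, hmono⟩ := ih α.succ_pos
    obtain ⟨ν, hν, hνc⟩ :=
      exists_isMinLoad_descent hlam hα hαL.le (hlev (α + 1) (by simp; omega))
    set c' : Finset (Fin L) → ℝ := fun U => if #U = α then ν U else c U
    have hc'α : ∀ U ∈ OmegaL L α, c' U = ν U := fun U hU => if_pos (mem_OmegaL.1 hU)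
    have hc' : ∀ β ≠ α, ∀ U ∈ OmegaL L β, c' U = c U := fun β hβ U hU =>
      if_neg (mem_OmegaL.1 hU ▸ hβ)
    refine ⟨c', fun β hβ => ?_, fun β hβ H h0 hsub => ?_⟩
    · rcases eq_or_ne β α with rfl | hne
      · exact hν.congr fun U hU => (hc'α U hU).symm
      · exact (hlev β (by simp at hβ ⊢; omega)).congr fun U hU => (hc' β hne U hU).symm
    · have hαβ : β + 1 ≠ α := by simp at hβ; omega
      rw [sum_congr rfl fun U hU => congrArg (· * H U) (hc' (β + 1) hαβ U hU)]
      rcases eq_or_ne β α with rfl | hne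
      · rw [sum_congr rfl fun U hU => congrArg (· * H U) (hc'α U hU)]
        exact hνc H h0 hsub
      · rw [sum_congr rfl fun U hU => congrArg (· * H U) (hc' β hne U hU)]
        exact hmono β (by simp at hβ ⊢; omega) H h0 hsub

end Descent

/-- **Subset entropy inequality of Yeung and Zhang** (Theorem 2): there is a nonnegative
weight function `c_λ` on subsets such that its restriction to each `Ω_L^{(α)}` is an optimal
solution of the linear program defining `f_α(λ)`, and the weighted subset entropy sums are
monotone along `α`. -/
theorem yeung_zhang_subset_entropy_inequality
    {L : ℕ} (hL : 1 ≤ L) (lam : Fin L → ℝ) (hlam : ∀ l, 0 ≤ lam l) :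
    ∃ c : Finset (Fin L) → ℝ,
      (∀ α ∈ Finset.Icc 1 L, IsOptimal L lam α c) ∧
      (∀ α ∈ Finset.Icc 2 L,
        ∀ (Ω : Type) [MeasurableSpace Ω] (μ : Measure Ω) [IsProbabilityMeasure μ]
          (S : Fin L → Type) [∀ l, Fintype (S l)] [∀ l, MeasurableSpace (S l)]
          [∀ l, MeasurableSingletonClass (S l)]
          (X : ∀ l, Ω → S l), (∀ l, Measurable (X l)) →
          ∑ V ∈ OmegaL L (α - 1), c V * entHset μ X V ≥
            ∑ U ∈ OmegaL L α, c U * entHset μ X U) := by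
  obtain ⟨c, hlev, hmono⟩ := exists_isMinLoad_levels hlam one_pos hL
  refine ⟨c, fun α hα => (hlev α hα).isOptimal hlam (by simp at hα; omega),
    fun α hα Ω _ μ _ S _ _ _ X hX => ?_⟩
  obtain ⟨β, rfl⟩ : ∃ β, α = β + 1 := ⟨α - 1, by simp at hα; omega⟩
  rw [Nat.add_sub_cancel]
  exact hmono β (by simp at hα ⊢; omega) (entHset μ X) (fun U => entH_nonneg μ _)
    (entHset_union_add_inter_le μ hX)
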